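/- There exist no vectors τ₀, τ₁, τ₂ ∈ H with ⟨τ₀,τ₀⟩ + ⟨τ₁,τ₁⟩ + ⟨τ₂,τ₂⟩ = 1 such that the four vectors Φ₀₀, Φ₀₁, Φ₁₀, Φ₁₁ form an orthonormal family in ℂ³ ⊗ H. -/

import Mathlib

open scoped BigOperators ComplexConjugate

variable {H : Type*} [NormedAddCommGroup H] [InnerProductSpace ℂ H]

/-- The primitive cube root of unity `ω = e^{2πi/3}`. -/
noncomputable def ω : ℂ := Complex.exp (2 * Real.pi * Complex.I / 3)

/-- `|v_j⟩ = (1/√3)(i|0⟩ + ω^{-j}|1⟩ + ω^{-2j}|2⟩)` in `ℂ³`. -/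
noncomputable def v (j : Fin 3) : Fin 3 → ℂ := fun k =>
  ((Real.sqrt 3 : ℂ))⁻¹ * (if k = 0 then Complex.I else ω ^ (-((j : ℕ) * (k : ℕ) : ℤ)))

/-- `|v_j'⟩ = (1/√3)(|0⟩ + ω^{-j}|1⟩ + i ω^{-2j}|2⟩)` in `ℂ³`. -/
noncomputable def v' (j : Fin 3) : Fin 3 → ℂ := fun k =>
  ((Real.sqrt 3 : ℂ))⁻¹ * (if k = 2 then Complex.I else 1) * ω ^ (-((j : ℕ) * (k : ℕ) : ℤ))

/-- The inner product on `ℂ³ ⊗ H`, viewed as triples of elements of `H`: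
`⟨x, y⟩ = ∑ₖ ⟨xₖ, yₖ⟩` (conjugate-linear in the first argument). -/
noncomputable def ip (x y : Fin 3 → H) : ℂ := ∑ k, (inner ℂ (x k) (y k) : ℂ)

/-- `Φ₀₀ = √2 [ |v₀⟩⊗τ₀ − ½|v₁⟩⊗τ₁ − ½|v₂⟩⊗τ₂ ]` in `ℂ³ ⊗ H`. -/
noncomputable def Phi00 (τ₀ τ₁ τ₂ : H) : Fin 3 → H := fun k =>
  (Real.sqrt 2 : ℂ) • (v 0 k • τ₀ - ((1/2 : ℂ) * v 1 k) • τ₁ - ((1/2 : ℂ) * v 2 k) • τ₂)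

/-- `Φ₀₁ = √2 [ −(√3/2)|v₁'⟩⊗τ₁ + (√3/2)|v₂'⟩⊗τ₂ ]` in `ℂ³ ⊗ H`. -/
noncomputable def Phi01 (τ₁ τ₂ : H) : Fin 3 → H := fun k =>
  (Real.sqrt 2 : ℂ) • ((-((Real.sqrt 3 : ℂ) / 2) * v' 1 k) • τ₁ +
    (((Real.sqrt 3 : ℂ) / 2) * v' 2 k) • τ₂)

/-- `Φ₁₀ = √2 [ (√3/2)|v₁⟩⊗τ₁ − (√3/2)|v₂⟩⊗τ₂ ]` in `ℂ³ ⊗ H`. -/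
noncomputable def Phi10 (τ₁ τ₂ : H) : Fin 3 → H := fun k =>
  (Real.sqrt 2 : ℂ) • ((((Real.sqrt 3 : ℂ) / 2) * v 1 k) • τ₁ -
    (((Real.sqrt 3 : ℂ) / 2) * v 2 k) • τ₂)

/-- `Φ₁₁ = √2 [ |v₀'⟩⊗τ₀ − ½|v₁'⟩⊗τ₁ − ½|v₂'⟩⊗τ₂ ]` in `ℂ³ ⊗ H`. -/
noncomputable def Phi11 (τ₀ τ₁ τ₂ : H) : Fin 3 → H := fun k =>
  (Real.sqrt 2 : ℂ) • (v' 0 k • τ₀ - ((1/2 : ℂ) * v' 1 k) • τ₁ - ((1/2 : ℂ) * v' 2 k) • τ₂)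

private lemma h3c : ((Real.sqrt 3 : ℝ) : ℂ)^2 = 3 := by
  rw [← Complex.ofReal_pow, Real.sq_sqrt (by norm_num : (0:ℝ) ≤ 3)]; norm_num

private lemma h2c : ((Real.sqrt 2 : ℝ) : ℂ)^2 = 2 := by
  rw [← Complex.ofReal_pow, Real.sq_sqrt (by norm_num : (0:ℝ) ≤ 2)]; norm_num

private lemma hIc : Complex.I ^ 2 = -1 := Complex.I_sq

private lemma hante : True := trivial

private lemma homval : ω = (-1 + (Real.sqrt 3 : ℂ) * Complex.I) / 2 := by
  have h1 : (2 * (Real.pi:ℂ) * Complex.I / 3 : ℂ) = ((Real.pi - Real.pi/3 : ℝ) : ℂ) * Complex.I := by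
    push_cast; ring
  rw [ω, h1, Complex.exp_mul_I, ← Complex.ofReal_cos, ← Complex.ofReal_sin,
    Real.cos_pi_sub, Real.sin_pi_sub, Real.cos_pi_div_three, Real.sin_pi_div_three]
  push_cast; ring

private lemma hominv : ω⁻¹ = (-1 - (Real.sqrt 3 : ℂ) * Complex.I) / 2 := by
  apply inv_eq_of_mul_eq_one_right
  rw [homval]
  linear_combination ((1/4:ℂ)) * h3c + ((-1/4:ℂ)*(Real.sqrt 3:ℂ)^2) * hIc

private lemma hzm2 : (ω ^ (2:ℤ))⁻¹ = (-1 + (Real.sqrt 3 : ℂ) * Complex.I) / 2 := by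
  have h : (ω ^ (2:ℤ))⁻¹ = (ω⁻¹)^2 := by rw [← inv_zpow]; norm_cast
  rw [h, hominv]
  linear_combination ((-1/4:ℂ)) * h3c + ((1/4:ℂ)*(Real.sqrt 3:ℂ)^2) * hIc

private lemma hzm4 : (ω ^ (4:ℤ))⁻¹ = (-1 - (Real.sqrt 3 : ℂ) * Complex.I) / 2 := by
  have h : (ω ^ (4:ℤ))⁻¹ = (ω⁻¹)^4 := by rw [← inv_zpow]; norm_cast
  rw [h, hominv]
  linear_combination ((-3/16:ℂ) + (-1/4:ℂ)*(Real.sqrt 3 : ℂ)*Complex.I + (1/16:ℂ)*(Real.sqrt 3 : ℂ)^2) * h3c + ((3/8:ℂ)*(Real.sqrt 3 : ℂ)^2 + (1/4:ℂ)*(Real.sqrt 3 : ℂ)^3*Complex.I + (-1/16:ℂ)*(Real.sqrt 3 : ℂ)^4 + (1/16:ℂ)*(Real.sqrt 3 : ℂ)^4*Complex.I^2) * hIc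

private lemma vL00 : v 0 0 = ((Real.sqrt 3 : ℂ))⁻¹ * Complex.I := by norm_num [v, Fin.ext_iff]
private lemma vL01 : v 0 1 = ((Real.sqrt 3 : ℂ))⁻¹ := by norm_num [v, Fin.ext_iff]
private lemma vL02 : v 0 2 = ((Real.sqrt 3 : ℂ))⁻¹ := by norm_num [v, Fin.ext_iff]
private lemma vL10 : v 1 0 = ((Real.sqrt 3 : ℂ))⁻¹ * Complex.I := by norm_num [v, Fin.ext_iff]
private lemma vL11 : v 1 1 = ((Real.sqrt 3 : ℂ))⁻¹ * ((-1 - (Real.sqrt 3 : ℂ) * Complex.I) / 2) := by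
  norm_num [v, Fin.ext_iff, hominv]
private lemma vL12 : v 1 2 = ((Real.sqrt 3 : ℂ))⁻¹ * ((-1 + (Real.sqrt 3 : ℂ) * Complex.I) / 2) := by
  norm_num [v, Fin.ext_iff, (by simpa using hzm2 : (ω ^ 2)⁻¹ = (-1 + (Real.sqrt 3 : ℂ) * Complex.I) / 2)]
private lemma vL20 : v 2 0 = ((Real.sqrt 3 : ℂ))⁻¹ * Complex.I := by norm_num [v, Fin.ext_iff]
private lemma vL21 : v 2 1 = ((Real.sqrt 3 : ℂ))⁻¹ * ((-1 + (Real.sqrt 3 : ℂ) * Complex.I) / 2) := by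
  norm_num [v, Fin.ext_iff, (by simpa using hzm2 : (ω ^ 2)⁻¹ = (-1 + (Real.sqrt 3 : ℂ) * Complex.I) / 2)]
private lemma vL22 : v 2 2 = ((Real.sqrt 3 : ℂ))⁻¹ * ((-1 - (Real.sqrt 3 : ℂ) * Complex.I) / 2) := by
  norm_num [v, Fin.ext_iff, (by simpa using hzm4 : (ω ^ 4)⁻¹ = (-1 - (Real.sqrt 3 : ℂ) * Complex.I) / 2)]
private lemma vP00 : v' 0 0 = ((Real.sqrt 3 : ℂ))⁻¹ := by norm_num [v', Fin.ext_iff]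
private lemma vP01 : v' 0 1 = ((Real.sqrt 3 : ℂ))⁻¹ := by norm_num [v', Fin.ext_iff]
private lemma vP02 : v' 0 2 = ((Real.sqrt 3 : ℂ))⁻¹ * Complex.I := by norm_num [v', Fin.ext_iff]
private lemma vP10 : v' 1 0 = ((Real.sqrt 3 : ℂ))⁻¹ := by norm_num [v', Fin.ext_iff]
private lemma vP11 : v' 1 1 = ((Real.sqrt 3 : ℂ))⁻¹ * ((-1 - (Real.sqrt 3 : ℂ) * Complex.I) / 2) := by
  norm_num [v', Fin.ext_iff, hominv]
private lemma vP12 : v' 1 2 = ((Real.sqrt 3 : ℂ))⁻¹ * Complex.I * ((-1 + (Real.sqrt 3 : ℂ) * Complex.I) / 2) := by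
  norm_num [v', Fin.ext_iff, (by simpa using hzm2 : (ω ^ 2)⁻¹ = (-1 + (Real.sqrt 3 : ℂ) * Complex.I) / 2)]
private lemma vP20 : v' 2 0 = ((Real.sqrt 3 : ℂ))⁻¹ := by norm_num [v', Fin.ext_iff]
private lemma vP21 : v' 2 1 = ((Real.sqrt 3 : ℂ))⁻¹ * ((-1 + (Real.sqrt 3 : ℂ) * Complex.I) / 2) := by
  norm_num [v', Fin.ext_iff, (by simpa using hzm2 : (ω ^ 2)⁻¹ = (-1 + (Real.sqrt 3 : ℂ) * Complex.I) / 2)]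
private lemma vP22 : v' 2 2 = ((Real.sqrt 3 : ℂ))⁻¹ * Complex.I * ((-1 - (Real.sqrt 3 : ℂ) * Complex.I) / 2) := by
  norm_num [v', Fin.ext_iff, (by simpa using hzm4 : (ω ^ 4)⁻¹ = (-1 - (Real.sqrt 3 : ℂ) * Complex.I) / 2)]

private lemma ip_conj (x y : Fin 3 → H) : ip x y = conj (ip y x) := by
  simp only [ip, map_sum, inner_conj_symm]

private lemma key (τ₀ τ₁ τ₂ : H) :
    ip (Phi00 τ₀ τ₁ τ₂) (Phi00 τ₀ τ₁ τ₂) + ip (Phi00 τ₀ τ₁ τ₂) (Phi01 τ₁ τ₂)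
      - 2 * ip (Phi00 τ₀ τ₁ τ₂) (Phi11 τ₀ τ₁ τ₂) + ip (Phi01 τ₁ τ₂) (Phi01 τ₁ τ₂)
      + ip (Phi01 τ₁ τ₂) (Phi10 τ₁ τ₂) + 2 * ip (Phi10 τ₁ τ₂) (Phi01 τ₁ τ₂)
      + ip (Phi10 τ₁ τ₂) (Phi11 τ₀ τ₁ τ₂) - ip (Phi11 τ₀ τ₁ τ₂) (Phi00 τ₀ τ₁ τ₂) = 0 := by
  simp only [ip, Phi00, Phi01, Phi10, Phi11, Fin.sum_univ_three,
    vL00, vL01, vL02, vL10, vL11, vL12, vL20, vL21, vL22,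
    vP00, vP01, vP02, vP10, vP11, vP12, vP20, vP21, vP22,
    inner_smul_left, inner_smul_right, inner_sub_left, inner_sub_right,
    inner_add_left, inner_add_right,
    map_mul, map_div₀, map_sub, map_add, map_neg, map_one, map_inv₀, map_ofNat,
    Complex.conj_I, Complex.conj_ofReal]
  linear_combination ((-1/16 : ℂ) * (Real.sqrt 2 : ℂ)^2 * ((Real.sqrt 3 : ℂ))⁻¹^2 * (inner ℂ τ₂ τ₂ : ℂ) + (-1/16 : ℂ) * (Real.sqrt 2 : ℂ)^2 * ((Real.sqrt 3 : ℂ))⁻¹^2 * (inner ℂ τ₂ τ₁ : ℂ) + (1/4 : ℂ) * (Real.sqrt 2 : ℂ)^2 * ((Real.sqrt 3 : ℂ))⁻¹^2 * (inner ℂ τ₂ τ₀ : ℂ) + (-1/16 : ℂ) * (Real.sqrt 2 : ℂ)^2 * ((Real.sqrt 3 : ℂ))⁻¹^2 * (inner ℂ τ₁ τ₂ : ℂ) + (-1/16 : ℂ) * (Real.sqrt 2 : ℂ)^2 * ((Real.sqrt 3 : ℂ))⁻¹^2 * (inner ℂ τ₁ τ₁ : ℂ) + (1/4 : ℂ) *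 (Real.sqrt 2 : ℂ)^2 * ((Real.sqrt 3 : ℂ))⁻¹^2 * (inner ℂ τ₁ τ₀ : ℂ) + (1/4 : ℂ) * (Real.sqrt 2 : ℂ)^2 * ((Real.sqrt 3 : ℂ))⁻¹^2 * (inner ℂ τ₀ τ₂ : ℂ) + (1/4 : ℂ) * (Real.sqrt 2 : ℂ)^2 * ((Real.sqrt 3 : ℂ))⁻¹^2 * (inner ℂ τ₀ τ₁ : ℂ) + (-1/16 : ℂ) * (Real.sqrt 2 : ℂ)^2 * ((Real.sqrt 3 : ℂ))⁻¹^2 * Complex.I * (inner ℂ τ₂ τ₂ : ℂ) + (-1/16 : ℂ) * (Real.sqrt 2 : ℂ)^2 * ((Real.sqrt 3 : ℂ))⁻¹^2 * Complex.I * (inner ℂ τ₂ τ₁ : ℂ) + (1/4 : ℂ) * (Real.sqrt 2 : ℂ)^2 * ((Real.sqrt 3 : ℂ))⁻¹^2 * Complex.I * (inner ℂ τ₂ τ₀ : ℂ) + (-1/16 : ℂ) * (Real.sqrt 2 : ℂ)^2 * ((Real.sqrt 3 : ℂ))⁻¹^2 * Complex.I * (inner ℂ τ₁ τ₂ : ℂ)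 + (-1/16 : ℂ) * (Real.sqrt 2 : ℂ)^2 * ((Real.sqrt 3 : ℂ))⁻¹^2 * Complex.I * (inner ℂ τ₁ τ₁ : ℂ) + (1/4 : ℂ) * (Real.sqrt 2 : ℂ)^2 * ((Real.sqrt 3 : ℂ))⁻¹^2 * Complex.I * (inner ℂ τ₁ τ₀ : ℂ) + (1/4 : ℂ) * (Real.sqrt 2 : ℂ)^2 * ((Real.sqrt 3 : ℂ))⁻¹^2 * Complex.I * (inner ℂ τ₀ τ₂ : ℂ) + (1/4 : ℂ) * (Real.sqrt 2 : ℂ)^2 * ((Real.sqrt 3 : ℂ))⁻¹^2 * Complex.I * (inner ℂ τ₀ τ₁ : ℂ) + (1/4 : ℂ) * (Real.sqrt 2 : ℂ)^2 * (Real.sqrt 3 : ℂ) * ((Real.sqrt 3 : ℂ))⁻¹^2 * Complex.I * (inner ℂ τ₂ τ₁ : ℂ) + (-1/4 : ℂ) * (Real.sqrt 2 : ℂ)^2 * (Real.sqrt 3 : ℂ) * ((Real.sqrt 3 : ℂ))⁻¹^2 * Complex.I * (inner ℂ τ₁ τ₂ : ℂ) + (-1/16 : ℂ) * (Real.sqrt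 2 : ℂ)^2 * (Real.sqrt 3 : ℂ)^2 * ((Real.sqrt 3 : ℂ))⁻¹^2 * (inner ℂ τ₂ τ₂ : ℂ) + (-1/16 : ℂ) * (Real.sqrt 2 : ℂ)^2 * (Real.sqrt 3 : ℂ)^2 * ((Real.sqrt 3 : ℂ))⁻¹^2 * (inner ℂ τ₂ τ₁ : ℂ) + (-1/16 : ℂ) * (Real.sqrt 2 : ℂ)^2 * (Real.sqrt 3 : ℂ)^2 * ((Real.sqrt 3 : ℂ))⁻¹^2 * (inner ℂ τ₁ τ₂ : ℂ) + (-1/16 : ℂ) * (Real.sqrt 2 : ℂ)^2 * (Real.sqrt 3 : ℂ)^2 * ((Real.sqrt 3 : ℂ))⁻¹^2 * (inner ℂ τ₁ τ₁ : ℂ) + (-1/16 : ℂ) * (Real.sqrt 2 : ℂ)^2 * (Real.sqrt 3 : ℂ)^2 * ((Real.sqrt 3 : ℂ))⁻¹^2 * Complex.I * (inner ℂ τ₂ τ₂ : ℂ) + (-1/16 : ℂ) * (Real.sqrt 2 : ℂ)^2 * (Real.sqrt 3 : ℂ)^2 * ((Real.sqrt 3 : ℂ))⁻¹^2 * Complex.I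 * (inner ℂ τ₂ τ₁ : ℂ) + (-1/16 : ℂ) * (Real.sqrt 2 : ℂ)^2 * (Real.sqrt 3 : ℂ)^2 * ((Real.sqrt 3 : ℂ))⁻¹^2 * Complex.I * (inner ℂ τ₁ τ₂ : ℂ) + (-1/16 : ℂ) * (Real.sqrt 2 : ℂ)^2 * (Real.sqrt 3 : ℂ)^2 * ((Real.sqrt 3 : ℂ))⁻¹^2 * Complex.I * (inner ℂ τ₁ τ₁ : ℂ)) * h3c + ((-1/4 : ℂ) * (Real.sqrt 2 : ℂ)^2 * ((Real.sqrt 3 : ℂ))⁻¹^2 * (inner ℂ τ₂ τ₂ : ℂ) + (-1/4 : ℂ) * (Real.sqrt 2 : ℂ)^2 * ((Real.sqrt 3 : ℂ))⁻¹^2 * (inner ℂ τ₂ τ₁ : ℂ) + (1/2 : ℂ) * (Real.sqrt 2 : ℂ)^2 * ((Real.sqrt 3 : ℂ))⁻¹^2 * (inner ℂ τ₂ τ₀ : ℂ) + (-1/4 : ℂ) * (Real.sqrt 2 : ℂ)^2 * ((Real.sqrt 3 : ℂ))⁻¹^2 * (inner ℂ τ₁ τ₂ : ℂ) + (-1/4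 : ℂ) * (Real.sqrt 2 : ℂ)^2 * ((Real.sqrt 3 : ℂ))⁻¹^2 * (inner ℂ τ₁ τ₁ : ℂ) + (1/2 : ℂ) * (Real.sqrt 2 : ℂ)^2 * ((Real.sqrt 3 : ℂ))⁻¹^2 * (inner ℂ τ₁ τ₀ : ℂ) + (1/2 : ℂ) * (Real.sqrt 2 : ℂ)^2 * ((Real.sqrt 3 : ℂ))⁻¹^2 * (inner ℂ τ₀ τ₂ : ℂ) + (1/2 : ℂ) * (Real.sqrt 2 : ℂ)^2 * ((Real.sqrt 3 : ℂ))⁻¹^2 * (inner ℂ τ₀ τ₁ : ℂ) + (-1 : ℂ) * (Real.sqrt 2 : ℂ)^2 * ((Real.sqrt 3 : ℂ))⁻¹^2 * (inner ℂ τ₀ τ₀ : ℂ) + (1/8 : ℂ) * (Real.sqrt 2 : ℂ)^2 * (Real.sqrt 3 : ℂ) * ((Real.sqrt 3 : ℂ))⁻¹^2 * (inner ℂ τ₂ τ₁ : ℂ) + (1/4 : ℂ) * (Real.sqrt 2 : ℂ)^2 * (Real.sqrt 3 : ℂ) * ((Real.sqrt 3 : ℂ))⁻¹^2 * (inner ℂ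 τ₂ τ₀ : ℂ) + (-1/8 : ℂ) * (Real.sqrt 2 : ℂ)^2 * (Real.sqrt 3 : ℂ) * ((Real.sqrt 3 : ℂ))⁻¹^2 * (inner ℂ τ₁ τ₂ : ℂ) + (-1/4 : ℂ) * (Real.sqrt 2 : ℂ)^2 * (Real.sqrt 3 : ℂ) * ((Real.sqrt 3 : ℂ))⁻¹^2 * (inner ℂ τ₁ τ₀ : ℂ) + (-1/4 : ℂ) * (Real.sqrt 2 : ℂ)^2 * (Real.sqrt 3 : ℂ) * ((Real.sqrt 3 : ℂ))⁻¹^2 * (inner ℂ τ₀ τ₂ : ℂ) + (1/4 : ℂ) * (Real.sqrt 2 : ℂ)^2 * (Real.sqrt 3 : ℂ) * ((Real.sqrt 3 : ℂ))⁻¹^2 * (inner ℂ τ₀ τ₁ : ℂ) + (-1/4 : ℂ) * (Real.sqrt 2 : ℂ)^2 * (Real.sqrt 3 : ℂ)^2 * ((Real.sqrt 3 : ℂ))⁻¹^2 * (inner ℂ τ₂ τ₁ : ℂ) + (-1/4 : ℂ) * (Real.sqrt 2 : ℂ)^2 * (Real.sqrt 3 : ℂ)^2 * ((Real.sqrt 3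 : ℂ))⁻¹^2 * (inner ℂ τ₂ τ₀ : ℂ) + (-1/4 : ℂ) * (Real.sqrt 2 : ℂ)^2 * (Real.sqrt 3 : ℂ)^2 * ((Real.sqrt 3 : ℂ))⁻¹^2 * (inner ℂ τ₁ τ₂ : ℂ) + (-1/4 : ℂ) * (Real.sqrt 2 : ℂ)^2 * (Real.sqrt 3 : ℂ)^2 * ((Real.sqrt 3 : ℂ))⁻¹^2 * (inner ℂ τ₁ τ₀ : ℂ) + (-1/4 : ℂ) * (Real.sqrt 2 : ℂ)^2 * (Real.sqrt 3 : ℂ)^2 * ((Real.sqrt 3 : ℂ))⁻¹^2 * (inner ℂ τ₀ τ₂ : ℂ) + (-1/4 : ℂ) * (Real.sqrt 2 : ℂ)^2 * (Real.sqrt 3 : ℂ)^2 * ((Real.sqrt 3 : ℂ))⁻¹^2 * (inner ℂ τ₀ τ₁ : ℂ) + (1/16 : ℂ) * (Real.sqrt 2 : ℂ)^2 * (Real.sqrt 3 : ℂ)^2 * ((Real.sqrt 3 : ℂ))⁻¹^2 * Complex.I * (inner ℂ τ₂ τ₂ : ℂ) + (-1/16 : ℂ) * (Real.sqrt 2 :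 ℂ)^2 * (Real.sqrt 3 : ℂ)^2 * ((Real.sqrt 3 : ℂ))⁻¹^2 * Complex.I * (inner ℂ τ₂ τ₁ : ℂ) + (-1/16 : ℂ) * (Real.sqrt 2 : ℂ)^2 * (Real.sqrt 3 : ℂ)^2 * ((Real.sqrt 3 : ℂ))⁻¹^2 * Complex.I * (inner ℂ τ₁ τ₂ : ℂ) + (1/16 : ℂ) * (Real.sqrt 2 : ℂ)^2 * (Real.sqrt 3 : ℂ)^2 * ((Real.sqrt 3 : ℂ))⁻¹^2 * Complex.I * (inner ℂ τ₁ τ₁ : ℂ) + (1/16 : ℂ) * (Real.sqrt 2 : ℂ)^2 * (Real.sqrt 3 : ℂ)^4 * ((Real.sqrt 3 : ℂ))⁻¹^2 * (inner ℂ τ₂ τ₂ : ℂ) + (1/16 : ℂ) * (Real.sqrt 2 : ℂ)^2 * (Real.sqrt 3 : ℂ)^4 * ((Real.sqrt 3 : ℂ))⁻¹^2 * (inner ℂ τ₂ τ₁ : ℂ) + (1/16 : ℂ) * (Real.sqrt 2 : ℂ)^2 * (Real.sqrt 3 : ℂ)^4 * ((Real.sqrt 3 : ℂ))⁻¹^2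 * (inner ℂ τ₁ τ₂ : ℂ) + (1/16 : ℂ) * (Real.sqrt 2 : ℂ)^2 * (Real.sqrt 3 : ℂ)^4 * ((Real.sqrt 3 : ℂ))⁻¹^2 * (inner ℂ τ₁ τ₁ : ℂ) + (1/16 : ℂ) * (Real.sqrt 2 : ℂ)^2 * (Real.sqrt 3 : ℂ)^4 * ((Real.sqrt 3 : ℂ))⁻¹^2 * Complex.I * (inner ℂ τ₂ τ₂ : ℂ) + (1/16 : ℂ) * (Real.sqrt 2 : ℂ)^2 * (Real.sqrt 3 : ℂ)^4 * ((Real.sqrt 3 : ℂ))⁻¹^2 * Complex.I * (inner ℂ τ₂ τ₁ : ℂ) + (1/16 : ℂ) * (Real.sqrt 2 : ℂ)^2 * (Real.sqrt 3 : ℂ)^4 * ((Real.sqrt 3 : ℂ))⁻¹^2 * Complex.I * (inner ℂ τ₁ τ₂ : ℂ) + (1/16 : ℂ) * (Real.sqrt 2 : ℂ)^2 * (Real.sqrt 3 : ℂ)^4 * ((Real.sqrt 3 : ℂ))⁻¹^2 * Complex.I * (inner ℂ τ₁ τ₁ : ℂ) + (1/16 : ℂ) * (Real.sqrt 2 : ℂ)^2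 * (Real.sqrt 3 : ℂ)^4 * ((Real.sqrt 3 : ℂ))⁻¹^2 * Complex.I^2 * (inner ℂ τ₂ τ₂ : ℂ) + (1/16 : ℂ) * (Real.sqrt 2 : ℂ)^2 * (Real.sqrt 3 : ℂ)^4 * ((Real.sqrt 3 : ℂ))⁻¹^2 * Complex.I^2 * (inner ℂ τ₂ τ₁ : ℂ) + (1/16 : ℂ) * (Real.sqrt 2 : ℂ)^2 * (Real.sqrt 3 : ℂ)^4 * ((Real.sqrt 3 : ℂ))⁻¹^2 * Complex.I^2 * (inner ℂ τ₁ τ₂ : ℂ) + (1/16 : ℂ) * (Real.sqrt 2 : ℂ)^2 * (Real.sqrt 3 : ℂ)^4 * ((Real.sqrt 3 : ℂ))⁻¹^2 * Complex.I^2 * (inner ℂ τ₁ τ₁ : ℂ)) * hIc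

/-- There are no vectors `τ₀, τ₁, τ₂ ∈ H` with
`⟨τ₀,τ₀⟩+⟨τ₁,τ₁⟩+⟨τ₂,τ₂⟩ = 1` such that `Φ₀₀, Φ₀₁, Φ₁₀, Φ₁₁` form an orthonormal
family in `ℂ³ ⊗ H`. -/
theorem no_orthonormal_Phi {H : Type*} [NormedAddCommGroup H] [InnerProductSpace ℂ H] :
    ¬ ∃ τ₀ τ₁ τ₂ : H,
      ((inner ℂ τ₀ τ₀ : ℂ) + inner ℂ τ₁ τ₁ + inner ℂ τ₂ τ₂ = 1) ∧
      ip (Phi00 τ₀ τ₁ τ₂) (Phi00 τ₀ τ₁ τ₂) = 1 ∧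
      ip (Phi01 τ₁ τ₂) (Phi01 τ₁ τ₂) = 1 ∧
      ip (Phi10 τ₁ τ₂) (Phi10 τ₁ τ₂) = 1 ∧
      ip (Phi11 τ₀ τ₁ τ₂) (Phi11 τ₀ τ₁ τ₂) = 1 ∧
      ip (Phi00 τ₀ τ₁ τ₂) (Phi01 τ₁ τ₂) = 0 ∧
      ip (Phi00 τ₀ τ₁ τ₂) (Phi10 τ₁ τ₂) = 0 ∧
      ip (Phi00 τ₀ τ₁ τ₂) (Phi11 τ₀ τ₁ τ₂) = 0 ∧
      ip (Phi01 τ₁ τ₂) (Phi10 τ₁ τ₂) = 0 ∧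
      ip (Phi01 τ₁ τ₂) (Phi11 τ₀ τ₁ τ₂) = 0 ∧
      ip (Phi10 τ₁ τ₂) (Phi11 τ₀ τ₁ τ₂) = 0 := by
  rintro ⟨τ₀, τ₁, τ₂, -, hn00, hn01, -, -, ho01, -, ho03, ho12, -, ho23⟩
  have h21 : ip (Phi10 τ₁ τ₂) (Phi01 τ₁ τ₂) = 0 := by
    rw [ip_conj, ho12, map_zero]
  have h30 : ip (Phi11 τ₀ τ₁ τ₂) (Phi00 τ₀ τ₁ τ₂) = 0 := by
    rw [ip_conj, ho03, map_zero]
  have K := key τ₀ τ₁ τ₂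
  rw [hn00, hn01, ho01, ho03, ho12, h21, h30, ho23] at K
  norm_num at K
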